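/- The entanglement coefficient vanishes for equal masses: E(1/2) = 0. -/
import Mathlib


open MeasureTheory

noncomputable abbrev R2 : Type := EuclideanSpace ℝ (Fin 2)

/-- The modified Bessel function of order zero. -/
noncomputable def I0 (x : ℝ) : ℝ :=
  (1 / Real.pi) * ∫ θ in (0:ℝ)..Real.pi, Real.exp (x * Real.cos θ)

/-- The function `J(μ₁,μ₂)` of (3.65). -/
noncomputable def Jfun (μ₁ μ₂ : ℝ) : ℝ :=
  ∫ q₂ : R2, (∫ q₁ : R2,
    Real.exp (-(1/2) * (μ₁ ^ 2 + μ₂ ^ 2) * ‖q₁ + q₂‖ ^ 2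
        - ‖μ₂ • q₁ - μ₁ • q₂‖ ^ 2 - ‖q₁‖ ^ 2 / 2) *
      I0 (|μ₁ - μ₂| * ‖q₁ + q₂‖ * ‖μ₂ • q₁ - μ₁ • q₂‖)) ^ 2

/-- The entanglement coefficient `E(μ₁)` of (3.67)/(1.9c). -/
noncomputable def Efun (μ₁ : ℝ) : ℝ :=
  2 * Real.pi ^ 2 / (1 + (2 * μ₁ - 1) ^ 2) * (1 + Real.sqrt (1 + (2 * μ₁ - 1) ^ 2)) -
    (2 / Real.pi) * (Jfun μ₁ (1 - μ₁) + Jfun (1 - μ₁) μ₁)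

lemma gauss2 {b : ℝ} (hb : 0 < b) : ∫ v : R2, Real.exp (-b * ‖v‖^2) = Real.pi / b := by
  rw [GaussianFourier.integral_rexp_neg_mul_sq_norm hb]
  simp [finrank_euclideanSpace_fin]

lemma I0_zero : I0 0 = 1 := by
  simp [I0, Real.exp_zero, mul_comm, Real.pi_ne_zero]

lemma exponent_id (q₁ q₂ : R2) :
    -(1/2) * ((1/2:ℝ) ^ 2 + (1/2:ℝ) ^ 2) * ‖q₁ + q₂‖ ^ 2
        - ‖(1/2:ℝ) • q₁ - (1/2:ℝ) • q₂‖ ^ 2 - ‖q₁‖ ^ 2 / 2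
      = -1 * ‖q₁‖^2 + (-(1/2) * ‖q₂‖^2) := by
  have h1 := norm_add_sq_real q₁ q₂
  have h2 : ((1:ℝ)/2) • q₁ - (1/2:ℝ) • q₂ = (1/2:ℝ) • (q₁ - q₂) := by
    rw [smul_sub]
  have h3 := norm_sub_sq_real q₁ q₂
  rw [h2, norm_smul]
  simp only [Real.norm_eq_abs, abs_of_pos (by norm_num : (0:ℝ) < 1/2)]
  rw [mul_pow]
  nlinarith [h1, h3]

lemma J_half : Jfun (1/2) (1/2) = Real.pi ^ 3 := by
  unfold Jfun
  have key : ∀ q₂ : R2, (∫ q₁ : R2,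
      Real.exp (-(1/2) * ((1/2:ℝ) ^ 2 + (1/2:ℝ) ^ 2) * ‖q₁ + q₂‖ ^ 2
          - ‖(1/2:ℝ) • q₁ - (1/2:ℝ) • q₂‖ ^ 2 - ‖q₁‖ ^ 2 / 2) *
        I0 (|(1:ℝ)/2 - 1/2| * ‖q₁ + q₂‖ * ‖(1/2:ℝ) • q₁ - (1/2:ℝ) • q₂‖))
      = Real.pi * Real.exp (-(1/2) * ‖q₂‖^2) := by
    intro q₂
    have : ∀ q₁ : R2,
        Real.exp (-(1/2) * ((1/2:ℝ) ^ 2 + (1/2:ℝ) ^ 2) * ‖q₁ + q₂‖ ^ 2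
            - ‖(1/2:ℝ) • q₁ - (1/2:ℝ) • q₂‖ ^ 2 - ‖q₁‖ ^ 2 / 2) *
          I0 (|(1:ℝ)/2 - 1/2| * ‖q₁ + q₂‖ * ‖(1/2:ℝ) • q₁ - (1/2:ℝ) • q₂‖)
        = Real.exp (-1 * ‖q₁‖^2) * Real.exp (-(1/2) * ‖q₂‖^2) := by
      intro q₁
      rw [exponent_id q₁ q₂, Real.exp_add]
      norm_num [I0_zero]
    simp only [this]
    rw [integral_mul_const, gauss2 one_pos]
    ring
  simp only [key]
  simp only [mul_pow, ← Real.exp_nat_mul]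
  rw [integral_const_mul]
  have : ∀ q₂ : R2, Real.exp ((2:ℕ) * (-(1/2) * ‖q₂‖^2)) = Real.exp (-1 * ‖q₂‖^2) := by
    intro q₂; congr 1; push_cast; ring
  simp only [this]
  rw [gauss2 one_pos]
  ring

/-- The entanglement coefficient vanishes for equal masses: `E(1/2) = 0`. -/
theorem entanglement_coefficient_equal_masses : Efun (1/2) = 0 := by
  have h : (1:ℝ) - 1/2 = 1/2 := by norm_num
  unfold Efun
  rw [h, J_half]
  have hπ : Real.pi ≠ 0 := Real.pi_ne_zero
  norm_num [Real.sqrt_one]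
  field_simp
  ring
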